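/- arXiv:2507.09032 — 3 statements merged into one kernel-verified Lean document; each statement's English description precedes it below -/
import Mathlib

section
/- (Large-D limit of the MedPoisson, Proposition 3.5.) Fix μ > 0. Then, as D → ∞ through odd values, either (i) there exists an integer m ∈ {⌊μ⌋, ⌈μ⌉} such that for every y ∈ ℕ, MedPois_μ^{(D)}(y) → 1 if y = m and MedPois_μ^{(D)}(y) → 0 otherwise (convergence to a point mass at ⌊μ⌋ or ⌈μ⌉); or (ii) there exists an integer m with {m, m+1} ∩ {⌊μ⌋, ⌈μ⌉} ≠ ∅ such that for every y ∈ ℕ, MedPois_μ^{(D)}(y) → 1/2 if y ∈ {m, m+1} and MedPois_μ^{(D)}(y) → 0 otherwise (convergence to the discrete uniform distribution on two consecutive integers, at least one of which is ⌊μ⌋ or ⌈μ⌉). -/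
/-!
With `G(y) = P(Pois_μ < y)` and `B_n(q) = P(Bin(2n+1, q) ≥ n+1)` we have
`MedPois_μ^{(2n+1)}(y) = B_n(G(y+1)) - B_n(G(y))`, and `B_n(q)` tends to `0`, `1/2`, `1` according
as `q <, =, > 1/2` (by the bound `B_n(q) ≤ 2q (4q(1-q))^n` and the symmetry
`B_n(q) + B_n(1-q) = 1`). Hence everything is decided by the Poisson median `m`, where
`G(m) < 1/2 ≤ G(m+1)`: the limit is the point mass at `m` if `G(m+1) > 1/2` and uniform on
`{m, m+1}` if `G(m+1) = 1/2`.

That `m ∈ {⌊μ⌋, ⌈μ⌉}` means `P(Pois_μ < ⌊μ⌋) < 1/2 < P(Pois_μ ≤ ⌈μ⌉)`. Since `∂_μ G(N+1) =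
-Pois_μ(N) ≤ 0`, it suffices to take `μ = n ∈ ℕ`, and to compare the tails `Pois_n(n + j)` and
`Pois_n(n - j)` through their ratios. The first bound follows from `Pois_n(n-1-j) ≤ Pois_n(n+j)`.
For the second, the two tails have the same first moment about `n` (the mean of `Pois_n`) and
their difference changes sign only once, so the lower tail carries at least as much mass.
-/

/-- The Poisson pmf with rate `μ`. -/
noncomputable def poisPMF (μ : ℝ) (k : ℕ) : ℝ := Real.exp (-μ) * μ ^ k / (Nat.factorial k : ℝ)

/-- `poisCDFlt μ y = ∑_{k < y} poisPMF μ k`, i.e. the Poisson CDF evaluated at `y - 1`. -/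
noncomputable def poisCDFlt (μ : ℝ) (y : ℕ) : ℝ := ∑ k ∈ Finset.range y, poisPMF μ k

/-- `B r D q = ∑_{t=r}^{D} (D choose t) q^t (1-q)^(D-t)`. -/
noncomputable def B (r D : ℕ) (q : ℝ) : ℝ :=
  ∑ t ∈ Finset.Icc r D, (D.choose t : ℝ) * q ^ t * (1 - q) ^ (D - t)

/-- pmf of the `r`-th order statistic of `D` iid Poisson(`μ`) draws. -/
noncomputable def poisOrderPMF (μ : ℝ) (r D : ℕ) (y : ℕ) : ℝ :=
  B r D (poisCDFlt μ (y + 1)) - B r D (poisCDFlt μ y)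

/-- `MedPois_μ^{(D)} := Pois_μ^{((D+1)/2, D)}` for odd `D`; here `D = 2n+1` and the
median rank is `n + 1`. -/
noncomputable def medPoisPMF (μ : ℝ) (D : ℕ) (y : ℕ) : ℝ := poisOrderPMF μ ((D + 1) / 2) D y

open Finset Filter Topology

lemma poisPMF_nonneg {μ : ℝ} (hμ : 0 ≤ μ) (k : ℕ) : 0 ≤ poisPMF μ k := by
  unfold poisPMF; positivity

lemma poisPMF_pos {μ : ℝ} (hμ : 0 < μ) (k : ℕ) : 0 < poisPMF μ k := by
  unfold poisPMF; positivity

lemma succ_mul_poisPMF_succ (μ : ℝ) (k : ℕ) :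
    (k + 1) * poisPMF μ (k + 1) = μ * poisPMF μ k := by
  unfold poisPMF
  rw [Nat.factorial_succ]
  push_cast
  field_simp
  ring

lemma hasSum_poisPMF (μ : ℝ) : HasSum (poisPMF μ) 1 := by
  have h := (NormedSpace.expSeries_div_hasSum_exp μ).mul_left (Real.exp (-μ))
  rw [← Real.exp_eq_exp_ℝ, ← Real.exp_add, neg_add_cancel, Real.exp_zero] at h
  rwa [show poisPMF μ = fun k => Real.exp (-μ) * (μ ^ k / k.factorial) from
    funext fun k => mul_div_assoc _ _ _]

lemma poisCDFlt_le_one {μ : ℝ} (hμ : 0 ≤ μ) (y : ℕ) : poisCDFlt μ y ≤ 1 :=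
  sum_le_hasSum _ (fun k _ => poisPMF_nonneg hμ k) (hasSum_poisPMF μ)

lemma poisCDFlt_nonneg {μ : ℝ} (hμ : 0 ≤ μ) (y : ℕ) : 0 ≤ poisCDFlt μ y :=
  sum_nonneg fun k _ => poisPMF_nonneg hμ k

lemma poisCDFlt_strictMono {μ : ℝ} (hμ : 0 < μ) : StrictMono (poisCDFlt μ) :=
  strictMono_nat_of_lt_succ fun y => by
    simp only [poisCDFlt, sum_range_succ]
    linarith [poisPMF_pos hμ y]

lemma poisCDFlt_lt_one {μ : ℝ} (hμ : 0 < μ) (y : ℕ) : poisCDFlt μ y < 1 :=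
  (poisCDFlt_strictMono hμ (Nat.lt_succ_self y)).trans_le (poisCDFlt_le_one hμ.le _)

lemma hasDerivAt_poisPMF_zero (x : ℝ) :
    HasDerivAt (fun t => poisPMF t 0) (-poisPMF x 0) x := by
  simpa [poisPMF] using (hasDerivAt_neg x).exp

lemma hasDerivAt_poisPMF_succ (x : ℝ) (k : ℕ) :
    HasDerivAt (fun t => poisPMF t (k + 1)) (poisPMF x k - poisPMF x (k + 1)) x := by
  have h := (((hasDerivAt_neg x).exp).mul (hasDerivAt_pow (k + 1) x)).div_const
    ((k + 1).factorial : ℝ)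
  refine h.congr_deriv ?_
  unfold poisPMF
  rw [Nat.factorial_succ]
  push_cast
  field_simp
  ring

lemma hasDerivAt_poisCDFlt_succ (x : ℝ) (N : ℕ) :
    HasDerivAt (fun t => poisCDFlt t (N + 1)) (-poisPMF x N) x := by
  induction N with
  | zero => simpa [poisCDFlt] using hasDerivAt_poisPMF_zero x
  | succ N ih =>
    simp only [poisCDFlt, sum_range_succ _ (N + 1)] at ih ⊢
    exact (ih.fun_add (hasDerivAt_poisPMF_succ x N)).congr_deriv (by ring)

lemma poisCDFlt_antitoneOn (y : ℕ) : AntitoneOn (fun t => poisCDFlt t y) (Set.Ici 0) := by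
  cases y with
  | zero => simp [poisCDFlt, AntitoneOn]
  | succ N =>
    have hd := fun x => hasDerivAt_poisCDFlt_succ x N
    refine antitoneOn_of_deriv_nonpos (convex_Ici 0)
      (fun x _ => (hd x).continuousAt.continuousWithinAt)
      (fun x _ => (hd x).differentiableAt.differentiableWithinAt) fun x hx => ?_
    rw [interior_Ici] at hx
    rw [(hd x).deriv, neg_nonpos]
    exact poisPMF_nonneg (le_of_lt hx) N

lemma nonpos_of_hasSum_of_single_crossing {c : ℕ → ℝ} {s : ℝ} {j₀ : ℕ} (hj₀ : 0 < j₀)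
    (hc : HasSum c s) (hmoment : HasSum (fun j : ℕ => (j : ℝ) * c j) 0)
    (hbelow : ∀ j < j₀, c j ≤ 0) (habove : ∀ j, j₀ ≤ j → 0 ≤ c j) : s ≤ 0 := by
  have hshift : HasSum (fun j : ℕ => ((j : ℝ) - j₀) * c j) (0 - j₀ * s) := by
    simpa only [sub_mul] using hmoment.sub (hc.mul_left (j₀ : ℝ))
  have hterm : ∀ j : ℕ, 0 ≤ ((j : ℝ) - j₀) * c j := fun j => by
    rcases lt_or_ge j j₀ with hj | hj
    · exact mul_nonneg_of_nonpos_of_nonpos (by simp [hj.le]) (hbelow j hj)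
    · exact mul_nonneg (by simp [hj]) (habove j hj)
  have h := hshift.nonneg hterm
  rw [zero_sub, neg_nonneg] at h
  exact nonpos_of_mul_nonpos_right h (Nat.cast_pos.mpr hj₀)

noncomputable def poisUpper (n j : ℕ) : ℝ := poisPMF n (n + j)

noncomputable def poisLower (n j : ℕ) : ℝ := if j ≤ n then poisPMF n (n - j) else 0

section

variable {n : ℕ}

lemma poisUpper_nonneg (j : ℕ) : 0 ≤ poisUpper n j := poisPMF_nonneg n.cast_nonneg _

lemma poisLower_nonneg (j : ℕ) : 0 ≤ poisLower n j := by
  unfold poisLower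
  split_ifs
  exacts [poisPMF_nonneg n.cast_nonneg _, le_rfl]

lemma poisUpper_zero : poisUpper n 0 = poisPMF n n := by simp [poisUpper]

lemma poisLower_zero : poisLower n 0 = poisPMF n n := by simp [poisLower]

lemma poisUpper_succ (j : ℕ) : poisUpper n (j + 1) = poisUpper n j * (n / (n + j + 1)) := by
  have h := succ_mul_poisPMF_succ n (n + j)
  push_cast at h
  unfold poisUpper
  rw [← add_assoc]
  field_simp
  linarith

lemma poisLower_succ {j : ℕ} (hj : j < n) :
    poisLower n (j + 1) = poisLower n j * ((n - j) / n) := by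
  have h := succ_mul_poisPMF_succ n (n - (j + 1))
  rw [show n - (j + 1) + 1 = n - j by omega, Nat.cast_sub (by omega)] at h
  have hn : (n : ℝ) ≠ 0 := Nat.cast_ne_zero.mpr (by omega)
  simp only [poisLower, if_pos hj.le, if_pos (show j + 1 ≤ n by omega)]
  field_simp
  push_cast at h
  linarith

lemma poisLower_succ_le_poisUpper {j : ℕ} (hj : j < n) : poisLower n (j + 1) ≤ poisUpper n j := by
  induction j with
  | zero =>
    rw [poisLower_succ hj, poisLower_zero, poisUpper_zero]
    have hn : (n : ℝ) ≠ 0 := Nat.cast_ne_zero.mpr (by omega)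
    simp [hn]
  | succ j ih =>
    rw [poisLower_succ hj, poisUpper_succ]
    have hn : (0 : ℝ) < n := Nat.cast_pos.mpr (by omega)
    have hjn : (j : ℝ) + 1 < n := by exact_mod_cast hj
    -- `(n - j - 1)(n + j + 1) = n² - (j + 1)² ≤ n²`
    have hratio : ((n : ℝ) - (j + 1 : ℕ)) / n ≤ n / (n + j + 1) := by
      rw [div_le_div_iff₀ hn (by positivity)]
      push_cast
      nlinarith
    exact mul_le_mul (ih (by omega)) hratio (div_nonneg (by push_cast; linarith) hn.le)
      (poisUpper_nonneg j)

lemma poisUpper_succ_lt_poisLower_succ {j : ℕ} (hj : j * (j + 1) < n) :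
    poisUpper n (j + 1) < poisLower n (j + 1) := by
  have hn : (0 : ℝ) < n := Nat.cast_pos.mpr (by omega)
  induction j with
  | zero =>
    rw [poisUpper_succ, poisLower_succ (by omega), poisUpper_zero, poisLower_zero]
    refine mul_lt_mul_of_pos_left ?_ (poisPMF_pos hn n)
    rw [div_lt_div_iff₀ (by positivity) hn]
    push_cast
    nlinarith
  | succ j ih =>
    have hjn : j + 1 < n := by nlinarith
    have hj' : ((j + 1 : ℕ) : ℝ) * ((j + 1 : ℕ) + 1) < n := by exact_mod_cast hj
    rw [poisUpper_succ, poisLower_succ hjn]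
    -- `n² ≤ (n - j - 1)(n + j + 2)` because `(j + 1)(j + 2) ≤ n`
    have hratio : (n : ℝ) / (n + (j + 1 : ℕ) + 1) ≤ (n - (j + 1 : ℕ)) / n := by
      rw [div_le_div_iff₀ (by positivity) hn]
      nlinarith
    calc poisUpper n (j + 1) * (n / (n + (j + 1 : ℕ) + 1))
        < poisLower n (j + 1) * (n / (n + (j + 1 : ℕ) + 1)) :=
          mul_lt_mul_of_pos_right (ih (by nlinarith)) (by positivity)
      _ ≤ poisLower n (j + 1) * ((n - (j + 1 : ℕ)) / n) :=
          mul_le_mul_of_nonneg_left hratio (poisLower_nonneg _)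

lemma poisLower_succ_le_poisUpper_succ {j : ℕ} (hj : 0 < j)
    (h : poisLower n j ≤ poisUpper n j) : poisLower n (j + 1) ≤ poisUpper n (j + 1) := by
  rcases le_or_gt n j with hnj | hjn
  · rw [show poisLower n (j + 1) = 0 from if_neg (by omega)]
    exact poisUpper_nonneg _
  have hn : (0 : ℝ) < n := Nat.cast_pos.mpr (by omega)
  have hcross : n ≤ j * (j + 1) := by
    obtain ⟨i, rfl⟩ : ∃ i, j = i + 1 := ⟨j - 1, by omega⟩
    by_contra! hlt
    exact (poisUpper_succ_lt_poisLower_succ (by nlinarith : i * (i + 1) < n)).not_ge h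
  have hcross' : (n : ℝ) ≤ j * (j + 1) := by exact_mod_cast hcross
  rw [poisLower_succ hjn, poisUpper_succ]
  -- `(n - j)(n + j + 1) = n² + n - j(j + 1) ≤ n²`
  have hratio : ((n : ℝ) - j) / n ≤ n / (n + j + 1) := by
    rw [div_le_div_iff₀ hn (by positivity)]
    nlinarith
  have hjn' : (j : ℝ) ≤ n := by exact_mod_cast hjn.le
  exact mul_le_mul h hratio (div_nonneg (by linarith) hn.le) (poisUpper_nonneg j)

end

lemma poisCDFlt_nat_lt_half (n : ℕ) : poisCDFlt n n < 1 / 2 := by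
  rcases Nat.eq_zero_or_pos n with rfl | hn
  · norm_num [poisCDFlt]
  have hreflect : poisCDFlt n n ≤ ∑ j ∈ range n, poisUpper n j := by
    rw [poisCDFlt, ← sum_range_reflect]
    refine sum_le_sum fun j hj => ?_
    have hj : j < n := mem_range.mp hj
    refine Eq.trans_le ?_ (poisLower_succ_le_poisUpper hj)
    rw [poisLower, if_pos (by omega), show n - (j + 1) = n - 1 - j by omega]
  have hsplit : poisCDFlt n (n + n) = poisCDFlt n n + ∑ j ∈ range n, poisUpper n j :=
    sum_range_add _ _ _
  linarith [poisCDFlt_lt_one (Nat.cast_pos.mpr hn) (n + n)]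

section

variable (n : ℕ)

lemma hasSum_poisUpper : HasSum (poisUpper n) (1 - poisCDFlt n n) := by
  have h := (hasSum_nat_add_iff' n).mpr (hasSum_poisPMF n)
  simp only [add_comm _ n] at h
  exact h

lemma hasSum_poisLower : HasSum (poisLower n) (poisCDFlt n (n + 1)) := by
  have hsupp : ∀ j ∉ range (n + 1), poisLower n j = 0 := fun j hj => by
    rw [poisLower, if_neg (by simpa [Nat.lt_succ_iff] using hj)]
  have hsum : ∑ j ∈ range (n + 1), poisLower n j = poisCDFlt n (n + 1) := by
    rw [poisCDFlt, ← sum_range_reflect]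
    refine sum_congr rfl fun j hj => ?_
    rw [mem_range] at hj
    rw [poisLower, if_pos (by omega)]
    congr 1
    omega
  exact hsum ▸ hasSum_sum_of_ne_finset_zero hsupp

lemma hasSum_mul_poisUpper : HasSum (fun j : ℕ => (j : ℝ) * poisUpper n j) (n * poisPMF n n) := by
  -- `(k + 1) Pois_n(k + 1) = n Pois_n(k)` turns the moment into a telescoping sum
  have hrec : ∀ j : ℕ, ((j + 1 : ℕ) : ℝ) * poisUpper n (j + 1)
      = n * (poisUpper n j - poisUpper n (j + 1)) := fun j => by
    rw [poisUpper_succ]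
    push_cast
    field_simp
    ring
  have hdiff :=
    ((hasSum_poisUpper n).sub ((hasSum_nat_add_iff' 1).mpr (hasSum_poisUpper n))).mul_left (n : ℝ)
  rw [sum_range_one, sub_sub_cancel, poisUpper_zero, ← funext hrec] at hdiff
  have h := (hasSum_nat_add_iff (f := fun j : ℕ => (j : ℝ) * poisUpper n j) 1).mp hdiff
  rwa [sum_range_one, Nat.cast_zero, zero_mul, add_zero] at h

lemma hasSum_mul_poisLower : HasSum (fun j : ℕ => (j : ℝ) * poisLower n j) (n * poisPMF n n) := by
  have hrec : ∀ j : ℕ, (j : ℝ) * poisLower n j = n * (poisLower n j - poisLower n (j + 1)) :=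
    fun j => by
      rcases lt_or_ge j n with hj | hj
      · rw [poisLower_succ hj]
        have hn : (n : ℝ) ≠ 0 := Nat.cast_ne_zero.mpr (by omega)
        field_simp
        ring
      · rw [show poisLower n (j + 1) = 0 from if_neg (by omega)]
        rcases hj.eq_or_lt with rfl | hj
        · ring
        · rw [show poisLower n j = 0 from if_neg (by omega)]
          ring
  have hdiff :=
    ((hasSum_poisLower n).sub ((hasSum_nat_add_iff' 1).mpr (hasSum_poisLower n))).mul_left (n : ℝ)
  rwa [sum_range_one, sub_sub_cancel, poisLower_zero, ← funext hrec] at hdiff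

lemma exists_single_crossing : ∃ j₀, 0 < j₀ ∧ (∀ j < j₀, poisUpper n j ≤ poisLower n j) ∧
    ∀ j, j₀ ≤ j → poisLower n j ≤ poisUpper n j := by
  have hex : ∃ j, 0 < j ∧ poisLower n j ≤ poisUpper n j :=
    ⟨n + 1, n.succ_pos, by
      rw [show poisLower n (n + 1) = 0 from if_neg (by omega)]
      exact poisUpper_nonneg _⟩
  refine ⟨Nat.find hex, (Nat.find_spec hex).1, fun j hj => ?_, fun j hj => ?_⟩
  · rcases Nat.eq_zero_or_pos j with rfl | hj0
    · rw [poisUpper_zero, poisLower_zero]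
    · exact (not_le.mp fun h => Nat.find_min hex hj ⟨hj0, h⟩).le
  · induction j, hj using Nat.le_induction with
    | base => exact (Nat.find_spec hex).2
    | succ j hj ih => exact poisLower_succ_le_poisUpper_succ ((Nat.find_spec hex).1.trans_le hj) ih

end

lemma half_lt_poisCDFlt_nat_succ (n : ℕ) : 1 / 2 < poisCDFlt n (n + 1) := by
  rcases Nat.eq_zero_or_pos n with rfl | hn
  · norm_num [poisCDFlt, poisPMF]
  obtain ⟨j₀, hj₀, hbelow, habove⟩ := exists_single_crossing n
  have hmoment : HasSum (fun j : ℕ => (j : ℝ) * (poisUpper n j - poisLower n j)) 0 := by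
    simpa only [mul_sub, sub_self] using (hasSum_mul_poisUpper n).sub (hasSum_mul_poisLower n)
  have htails := nonpos_of_hasSum_of_single_crossing hj₀
    ((hasSum_poisUpper n).sub (hasSum_poisLower n)) hmoment
    (fun j hj => sub_nonpos.mpr (hbelow j hj)) (fun j hj => sub_nonneg.mpr (habove j hj))
  linarith [poisCDFlt_strictMono (Nat.cast_pos.mpr hn) n.lt_succ_self]

lemma poisCDFlt_floor_lt_half {μ : ℝ} (hμ : 0 ≤ μ) : poisCDFlt μ ⌊μ⌋₊ < 1 / 2 :=
  (poisCDFlt_antitoneOn _ (Nat.cast_nonneg _ : (0 : ℝ) ≤ ⌊μ⌋₊) hμ (Nat.floor_le hμ)).trans_lt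
    (poisCDFlt_nat_lt_half _)

lemma half_lt_poisCDFlt_ceil_succ {μ : ℝ} (hμ : 0 ≤ μ) : 1 / 2 < poisCDFlt μ (⌈μ⌉₊ + 1) :=
  (half_lt_poisCDFlt_nat_succ _).trans_le
    (poisCDFlt_antitoneOn _ hμ (Nat.cast_nonneg _ : (0 : ℝ) ≤ ⌈μ⌉₊) (Nat.le_ceil μ))

lemma exists_poisMedian {μ : ℝ} (hμ : 0 ≤ μ) : ∃ m : ℕ, (m = ⌊μ⌋₊ ∨ m = ⌈μ⌉₊) ∧
    poisCDFlt μ m < 1 / 2 ∧ 1 / 2 ≤ poisCDFlt μ (m + 1) := by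
  by_cases h : 1 / 2 ≤ poisCDFlt μ (⌊μ⌋₊ + 1)
  · exact ⟨⌊μ⌋₊, Or.inl rfl, poisCDFlt_floor_lt_half hμ, h⟩
  have hceil := half_lt_poisCDFlt_ceil_succ hμ
  have hceil_eq : ⌈μ⌉₊ = ⌊μ⌋₊ + 1 := by
    have hne : ⌊μ⌋₊ ≠ ⌈μ⌉₊ := fun heq => h (heq ▸ hceil.le)
    have := Nat.ceil_le_floor_add_one μ
    have := Nat.floor_le_ceil μ
    omega
  exact ⟨⌈μ⌉₊, Or.inr rfl, hceil_eq ▸ not_le.mp h, hceil.le⟩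

lemma B_nonneg {q : ℝ} (hq0 : 0 ≤ q) (hq1 : q ≤ 1) (r D : ℕ) : 0 ≤ B r D q :=
  sum_nonneg fun t _ => by
    have := sub_nonneg.mpr hq1
    positivity

lemma B_add_B_one_sub {r s D : ℕ} (hrs : r + s = D + 1) (q : ℝ) :
    B r D q + B s D (1 - q) = 1 := by
  have hreflect : B s D (1 - q) = ∑ t ∈ range r, (D.choose t : ℝ) * q ^ t * (1 - q) ^ (D - t) := by
    refine sum_nbij' (fun t => D - t) (fun t => D - t) ?_ ?_ ?_ ?_ ?_ <;> intro t ht <;>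
      simp only [mem_Icc, mem_range] at ht ⊢
    · omega
    · omega
    · omega
    · omega
    · rw [Nat.choose_symm ht.2, sub_sub_cancel, Nat.sub_sub_self ht.2]
      ring
  have htotal : ∑ t ∈ range (D + 1), (D.choose t : ℝ) * q ^ t * (1 - q) ^ (D - t) = 1 := by
    have h := (add_pow q (1 - q) D).symm
    rw [add_sub_cancel, one_pow] at h
    exact (sum_congr rfl fun t _ => by ring).trans h
  rw [hreflect, B, ← Ico_add_one_right_eq_Icc, add_comm, sum_range_add_sum_Ico _ (by omega)]
  exact htotal

lemma B_le_geometric {q : ℝ} (hq0 : 0 ≤ q) (hq : q ≤ 1 / 2) (n : ℕ) :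
    B (n + 1) (2 * n + 1) q ≤ 2 * q * (4 * q * (1 - q)) ^ n := by
  have hq1 : 0 ≤ 1 - q := by linarith
  have hterm : ∀ t ∈ Icc (n + 1) (2 * n + 1),
      q ^ t * (1 - q) ^ (2 * n + 1 - t) ≤ q ^ (n + 1) * (1 - q) ^ n := by
    intro t ht
    rw [mem_Icc] at ht
    obtain ⟨s, rfl⟩ : ∃ s, t = n + 1 + s := ⟨t - (n + 1), by omega⟩
    calc q ^ (n + 1 + s) * (1 - q) ^ (2 * n + 1 - (n + 1 + s))
        = q ^ (n + 1) * (q ^ s * (1 - q) ^ (n - s)) := by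
          rw [show 2 * n + 1 - (n + 1 + s) = n - s by omega]
          ring
      _ ≤ q ^ (n + 1) * ((1 - q) ^ s * (1 - q) ^ (n - s)) := by
          gcongr
          linarith
      _ = q ^ (n + 1) * (1 - q) ^ n := by rw [← pow_add, Nat.add_sub_cancel' (by omega)]
  calc B (n + 1) (2 * n + 1) q
      ≤ ∑ t ∈ Icc (n + 1) (2 * n + 1), ((2 * n + 1).choose t : ℝ) * (q ^ (n + 1) * (1 - q) ^ n) :=
        sum_le_sum fun t ht => by
          rw [mul_assoc]
          exact mul_le_mul_of_nonneg_left (hterm t ht) (Nat.cast_nonneg _)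
    _ ≤ ∑ t ∈ range (2 * n + 1 + 1),
          ((2 * n + 1).choose t : ℝ) * (q ^ (n + 1) * (1 - q) ^ n) := by
        refine sum_le_sum_of_subset_of_nonneg (fun t ht => ?_) fun t _ _ => ?_
        · rw [mem_Icc] at ht
          rw [mem_range]
          omega
        · positivity
    _ = 2 * q * (4 * q * (1 - q)) ^ n := by
        rw [← sum_mul, ← Nat.cast_sum, Nat.sum_range_choose, mul_pow, mul_pow, pow_succ, pow_mul]
        push_cast
        ring

lemma tendsto_B_of_lt_half {q : ℝ} (hq0 : 0 ≤ q) (hq : q < 1 / 2) :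
    Tendsto (fun n : ℕ => B (n + 1) (2 * n + 1) q) atTop (𝓝 0) := by
  -- `1 - 4q(1 - q) = (1 - 2q)² > 0`
  have hratio : 4 * q * (1 - q) < 1 := by nlinarith
  have hgeom := (tendsto_pow_atTop_nhds_zero_of_lt_one (by nlinarith) hratio).const_mul (2 * q)
  rw [mul_zero] at hgeom
  exact tendsto_of_tendsto_of_tendsto_of_le_of_le tendsto_const_nhds hgeom
    (fun n => B_nonneg hq0 (by linarith) _ _) (B_le_geometric hq0 hq.le)

lemma tendsto_B_of_half_lt {q : ℝ} (hq : 1 / 2 < q) (hq1 : q ≤ 1) :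
    Tendsto (fun n : ℕ => B (n + 1) (2 * n + 1) q) atTop (𝓝 1) := by
  have h := (tendsto_B_of_lt_half (sub_nonneg.mpr hq1) (by linarith)).const_sub 1
  rw [sub_zero] at h
  refine h.congr fun n => ?_
  linarith [B_add_B_one_sub (show n + 1 + (n + 1) = 2 * n + 1 + 1 by ring) q]

lemma B_half (n : ℕ) : B (n + 1) (2 * n + 1) (1 / 2) = 1 / 2 := by
  have h := B_add_B_one_sub (show n + 1 + (n + 1) = 2 * n + 1 + 1 by ring) (1 / 2 : ℝ)
  norm_num at h ⊢
  linarith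

noncomputable def majorityLimit (q : ℝ) : ℝ :=
  if q < 1 / 2 then 0 else if q = 1 / 2 then 1 / 2 else 1

lemma majorityLimit_of_lt_half {q : ℝ} (hq : q < 1 / 2) : majorityLimit q = 0 := if_pos hq

lemma majorityLimit_half : majorityLimit (1 / 2) = 1 / 2 := by norm_num [majorityLimit]

lemma majorityLimit_of_half_lt {q : ℝ} (hq : 1 / 2 < q) : majorityLimit q = 1 := by
  rw [majorityLimit, if_neg hq.not_gt, if_neg hq.ne']

lemma tendsto_B_majorityLimit {q : ℝ} (hq0 : 0 ≤ q) (hq1 : q ≤ 1) :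
    Tendsto (fun n : ℕ => B (n + 1) (2 * n + 1) q) atTop (𝓝 (majorityLimit q)) := by
  rcases lt_trichotomy q (1 / 2) with hq | rfl | hq
  · rw [majorityLimit_of_lt_half hq]
    exact tendsto_B_of_lt_half hq0 hq
  · simp only [majorityLimit_half, B_half, tendsto_const_nhds]
  · rw [majorityLimit_of_half_lt hq]
    exact tendsto_B_of_half_lt hq hq1

lemma tendsto_medPoisPMF {μ : ℝ} (hμ : 0 ≤ μ) (y : ℕ) :
    Tendsto (fun n : ℕ => medPoisPMF μ (2 * n + 1) y) atTop
      (𝓝 (majorityLimit (poisCDFlt μ (y + 1)) - majorityLimit (poisCDFlt μ y))) := by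
  have hrank : ∀ n : ℕ, (2 * n + 1 + 1) / 2 = n + 1 := fun n => by omega
  simp only [medPoisPMF, poisOrderPMF, hrank]
  exact (tendsto_B_majorityLimit (poisCDFlt_nonneg hμ _) (poisCDFlt_le_one hμ _)).sub
    (tendsto_B_majorityLimit (poisCDFlt_nonneg hμ _) (poisCDFlt_le_one hμ _))

lemma majorityLimit_comp_of_strictMono {G : ℕ → ℝ} (hG : StrictMono G) {m : ℕ}
    (hm : G m < 1 / 2) (hm' : 1 / 2 ≤ G (m + 1)) (y : ℕ) :
    majorityLimit (G y) =
      if y ≤ m then 0 else if y = m + 1 then majorityLimit (G (m + 1)) else 1 := by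
  split_ifs with hle heq
  · exact majorityLimit_of_lt_half ((hG.monotone hle).trans_lt hm)
  · rw [heq]
  · exact majorityLimit_of_half_lt (hm'.trans_lt (hG (by omega)))

/-- **Proposition 3.5** (large-`D` limit of the MedPoisson): for `μ > 0`, as `D = 2n+1 → ∞`
through odd values, `MedPois_μ^{(D)}` converges pointwise either to a point mass at some
`m ∈ {⌊μ⌋, ⌈μ⌉}`, or to the uniform distribution on two consecutive integers `{m, m+1}`,
at least one of which is `⌊μ⌋` or `⌈μ⌉`. -/
theorem medpois_large_D_limit (μ : ℝ) (hμ : 0 < μ) :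
    (∃ m : ℕ, (m = ⌊μ⌋₊ ∨ m = ⌈μ⌉₊) ∧ ∀ y : ℕ,
      Filter.Tendsto (fun n : ℕ => medPoisPMF μ (2 * n + 1) y) Filter.atTop
        (nhds (if y = m then (1 : ℝ) else 0))) ∨
    (∃ m : ℕ, (m = ⌊μ⌋₊ ∨ m = ⌈μ⌉₊ ∨ m + 1 = ⌊μ⌋₊ ∨ m + 1 = ⌈μ⌉₊) ∧ ∀ y : ℕ,
      Filter.Tendsto (fun n : ℕ => medPoisPMF μ (2 * n + 1) y) Filter.atTop
        (nhds (if y = m ∨ y = m + 1 then (1 : ℝ) / 2 else 0))) := by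
  obtain ⟨m, hm, hGm, hGm1⟩ := exists_poisMedian hμ.le
  have hstep := majorityLimit_comp_of_strictMono (poisCDFlt_strictMono hμ) hGm hGm1
  rcases hGm1.lt_or_eq with hgt | heq
  · refine Or.inl ⟨m, hm, fun y => ?_⟩
    convert tendsto_medPoisPMF hμ.le y using 2
    rw [hstep (y + 1), hstep y, majorityLimit_of_half_lt hgt]
    split_ifs <;> (try norm_num) <;> omega
  · refine Or.inr ⟨m, by tauto, fun y => ?_⟩
    convert tendsto_medPoisPMF hμ.le y using 2
    rw [hstep (y + 1), hstep y, ← heq, majorityLimit_half]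
    split_ifs <;> (try norm_num) <;> omega
end

section
/- (Sufficiency of the count statistics, first part of Lemma 5.1.) Fix Y ∈ ℤ, integers 1 ≤ r ≤ D and 0 ≤ d ≤ D. If (z_1,…,z_d) and (z'_1,…,z'_d) ∈ ℤ^d have the same counts (n1, n2, n3) relative to Y, then P(os_r(Z) = Y ∧ Z_1 = z_1, …, Z_d = z_d) · ∏_{t=1}^d f(z'_t) = P(os_r(Z) = Y ∧ Z_1 = z'_1, …, Z_d = z'_d) · ∏_{t=1}^d f(z_t). In particular, when ∏_t f(z_t) > 0, the conditional probability P(os_r(Z) = Y | Z_1 = z_1, …, Z_d = z_d) depends on (z_1,…,z_d) only through (n1, n2, n3). -/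
/-!
Split `Z` into the observed prefix `(Z_1, …, Z_d)` and the unobserved tail. Since
`#{Z_i ≤ y}` is the prefix count plus the tail count, the event `os_r(Z) = Y` with prefix
`z` is `{z} × W`, where the tail event `W` depends on `z` only through `#{z_t < Y}` and
`#{z_t ≤ Y}`. By independence its probability is `∏ f(z_t) · P(W)`, so the cross-multiplied
expressions for `z` and `z'` coincide.
-/

open MeasureTheory

/-- The measure on ℤ with mass function `f`. -/
noncomputable def parentMeasure (f : ℤ → ℝ) : Measure ℤ :=
  Measure.count.withDensity fun z => ENNReal.ofReal (f z)

/-- `P f D S` is the probability of the event `S` under the `D`-fold product of the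
measure on ℤ with pmf `f`, i.e. the law of `D` i.i.d. draws `Z = (Z_1, …, Z_D)` from `f`. -/
noncomputable def P (f : ℤ → ℝ) (D : ℕ) (S : Set (Fin D → ℤ)) : ℝ :=
  (Measure.pi (fun _ : Fin D => parentMeasure f) S).toReal

/-- The CDF of `f`: `F(y) = ∑_{t ≤ y} f(t)`. -/
noncomputable def Fcdf (f : ℤ → ℝ) (y : ℤ) : ℝ := ∑' z : {t : ℤ // t ≤ y}, f z.1

/-- The number of entries of `z` that are `≤ y`. -/
def countLe {n : ℕ} (z : Fin n → ℤ) (y : ℤ) : ℕ :=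
  (Finset.univ.filter fun i => z i ≤ y).card

/-- `osEq r z Y` says that the `r`-th smallest entry of `z` (counting multiplicity)
equals `Y`: the `r`-th order statistic is `≤ Y` but not `≤ Y - 1`. -/
def osEq {n : ℕ} (r : ℕ) (z : Fin n → ℤ) (Y : ℤ) : Prop :=
  r ≤ countLe z Y ∧ countLe z (Y - 1) < r

/-- The order-statistic CDF `F^{(a,m)}(y) = ∑_{t=a}^{m} (m choose t) F(y)^t (1−F(y))^{m−t}`. -/
noncomputable def osCDF (f : ℤ → ℝ) (a m : ℕ) (y : ℤ) : ℝ :=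
  ∑ t ∈ Finset.Icc a m, (m.choose t : ℝ) * Fcdf f y ^ t * (1 - Fcdf f y) ^ (m - t)

theorem MeasureTheory.Measure.pi_prefix_suffix {α : Type*} [MeasurableSpace α]
    (μ : Measure α) [SigmaFinite μ] {d m : ℕ} (x : Fin d → α) (W : Set (Fin m → α)) :
    Measure.pi (fun _ : Fin (d + m) => μ)
        {ω | (∀ t, ω (Fin.castAdd m t) = x t) ∧ (fun i => ω (Fin.natAdd d i)) ∈ W}
      = (∏ t, μ {x t}) * Measure.pi (fun _ => μ) W := by
  let ψ := MeasurableEquiv.piCongrLeft (fun _ : Fin (d + m) => α) finSumFinEquiv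
  let φ := MeasurableEquiv.sumPiEquivProdPi (fun _ : Fin d ⊕ Fin m => α)
  have hψ : MeasurePreserving ψ (Measure.pi fun _ => μ) (Measure.pi fun _ => μ) :=
    measurePreserving_piCongrLeft (fun _ => μ) finSumFinEquiv
  have hφ := measurePreserving_sumPiEquivProdPi_symm (fun _ : Fin d ⊕ Fin m => μ)
  have he : MeasurePreserving (φ.symm.trans ψ)
      ((Measure.pi fun _ => μ).prod (Measure.pi fun _ => μ)) (Measure.pi fun _ => μ) :=
    hψ.comp hφ
  have happend : ∀ p s, ψ (φ.symm p) (finSumFinEquiv s) = Sum.elim p.1 p.2 s :=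
    fun _ _ => Equiv.piCongrLeft_apply_apply _ _ _ _
  have hpre : φ.symm.trans ψ ⁻¹'
      {ω | (∀ t, ω (Fin.castAdd m t) = x t) ∧ (fun i => ω (Fin.natAdd d i)) ∈ W}
      = {x} ×ˢ W := by
    ext p
    have hl := fun t => happend p (.inl t)
    have hr := fun i => happend p (.inr i)
    simp only [finSumFinEquiv_apply_left, finSumFinEquiv_apply_right, Sum.elim_inl,
      Sum.elim_inr] at hl hr
    simp [hl, hr, funext_iff]
  have hx : ({x} : Set (Fin d → α)) = Set.univ.pi fun t => {x t} := by
    ext; simp [funext_iff]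
  rw [← he.measure_preimage_equiv, hpre, Measure.prod_prod, hx, Measure.pi_pi]

instance (f : ℤ → ℝ) : SigmaFinite (parentMeasure f) :=
  SigmaFinite.withDensity_ofReal f

theorem parentMeasure_singleton (f : ℤ → ℝ) (a : ℤ) :
    parentMeasure f {a} = ENNReal.ofReal (f a) := by
  rw [parentMeasure, withDensity_apply _ (measurableSet_singleton a),
    lintegral_singleton, Measure.count_singleton, mul_one]

theorem countLe_eq_add {d m : ℕ} (ω : Fin (d + m) → ℤ) (y : ℤ) :
    countLe ω y = countLe (fun t => ω (Fin.castAdd m t)) y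
      + countLe (fun i => ω (Fin.natAdd d i)) y := by
  simp only [countLe, Finset.card_filter, Fin.sum_univ_add]

theorem countLe_sub_one {n : ℕ} (z : Fin n → ℤ) (y : ℤ) :
    countLe z (y - 1) = (Finset.univ.filter fun t => z t < y).card := by
  simp only [countLe, Int.le_sub_one_iff]

theorem countLe_eq_card_lt_add_card_eq {n : ℕ} (z : Fin n → ℤ) (y : ℤ) :
    countLe z y = (Finset.univ.filter fun t => z t < y).card
      + (Finset.univ.filter fun t => z t = y).card := by
  simp only [countLe, Finset.card_filter, ← Finset.sum_add_distrib]
  refine Finset.sum_congr rfl fun t _ => ?_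
  split_ifs <;> omega

def osEqTail {m : ℕ} (r : ℕ) (Y : ℤ) (a b : ℕ) : Set (Fin m → ℤ) :=
  {w | r ≤ a + countLe w Y ∧ b + countLe w (Y - 1) < r}

theorem P_osEq_and_prefix_eq {f : ℤ → ℝ} (hf0 : ∀ z, 0 ≤ f z) (r m : ℕ) (Y : ℤ) {d : ℕ}
    (x : Fin d → ℤ) :
    P f (d + m) {ω | osEq r ω Y ∧ ∀ t, ω (Fin.castAdd m t) = x t}
      = (∏ t, f (x t)) * P f m (osEqTail r Y (countLe x Y) (countLe x (Y - 1))) := by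
  have hevent : {ω | osEq r ω Y ∧ ∀ t, ω (Fin.castAdd m t) = x t}
      = {ω | (∀ t, ω (Fin.castAdd m t) = x t) ∧
          (fun i => ω (Fin.natAdd d i)) ∈ osEqTail r Y (countLe x Y) (countLe x (Y - 1))} := by
    ext ω
    simp only [Set.mem_ofPred_eq, osEq, osEqTail, countLe_eq_add ω]
    rw [and_comm]
    refine and_congr_right fun hx => ?_
    obtain rfl : (fun t => ω (Fin.castAdd m t)) = x := funext hx
    rfl
  rw [P, P, hevent, Measure.pi_prefix_suffix, ENNReal.toReal_mul, ENNReal.toReal_prod]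
  simp only [parentMeasure_singleton, ENNReal.toReal_ofReal (hf0 _)]

theorem order_statistic_count_sufficiency_general
    (f : ℤ → ℝ) (hf0 : ∀ z, 0 ≤ f z)
    (Y : ℤ) (D r d : ℕ) (hd : d ≤ D)
    (z z' : Fin d → ℤ)
    (h1 : (Finset.univ.filter fun t => z t < Y).card
        = (Finset.univ.filter fun t => z' t < Y).card)
    (h2 : (Finset.univ.filter fun t => z t = Y).card
        = (Finset.univ.filter fun t => z' t = Y).card) :
    P f D {ω | osEq r ω Y ∧ ∀ t : Fin d, ω (Fin.castLE hd t) = z t} * ∏ t, f (z' t)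
      = P f D {ω | osEq r ω Y ∧ ∀ t : Fin d, ω (Fin.castLE hd t) = z' t} * ∏ t, f (z t) := by
  obtain ⟨m, rfl⟩ := Nat.exists_eq_add_of_le hd
  have hcast : ∀ t : Fin d, Fin.castLE hd t = Fin.castAdd m t := fun _ => rfl
  have hlt : countLe z (Y - 1) = countLe z' (Y - 1) := by
    rw [countLe_sub_one, countLe_sub_one, h1]
  have hle : countLe z Y = countLe z' Y := by
    rw [countLe_eq_card_lt_add_card_eq, countLe_eq_card_lt_add_card_eq, h1, h2]
  simp only [hcast, P_osEq_and_prefix_eq hf0, hlt, hle]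
  ring

/-- **Lemma 5.1, first part** (sufficiency of the count statistics): if two observed
prefixes `z, z' ∈ ℤ^d` have the same counts of entries `< Y`, `= Y` and `> Y`, then the
joint probabilities of observing the prefix together with `os_r(Z) = Y`, reweighted by the
parent pmf of the other prefix, agree.  In particular the conditional probability
`P(os_r(Z) = Y ∣ Z_1 = z_1, …, Z_d = z_d)` depends on the prefix only through the counts. -/
theorem order_statistic_count_sufficiency
    (f : ℤ → ℝ) (hf0 : ∀ z, 0 ≤ f z) (hf1 : HasSum f 1)
    (Y : ℤ) (D r d : ℕ) (hr1 : 1 ≤ r) (hrD : r ≤ D) (hd : d ≤ D)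
    (z z' : Fin d → ℤ)
    (h1 : (Finset.univ.filter fun t => z t < Y).card
        = (Finset.univ.filter fun t => z' t < Y).card)
    (h2 : (Finset.univ.filter fun t => z t = Y).card
        = (Finset.univ.filter fun t => z' t = Y).card)
    (h3 : (Finset.univ.filter fun t => Y < z t).card
        = (Finset.univ.filter fun t => Y < z' t).card) :
    P f D {ω | osEq r ω Y ∧ ∀ t : Fin d, ω (Fin.castLE hd t) = z t} * ∏ t, f (z' t)
      = P f D {ω | osEq r ω Y ∧ ∀ t : Fin d, ω (Fin.castLE hd t) = z' t} * ∏ t, f (z t) :=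
  order_statistic_count_sufficiency_general f hf0 Y D r d hd z z' h1 h2
end

section
/- (Conditional independence given categories, Theorem 5.2.) Fix Y ∈ ℤ and 1 ≤ r ≤ D. Let c = (c_1,…,c_D) ∈ {lt, eq, gt}^D be a category pattern with m(c_d) > 0 for every d. Then for every z = (z_1,…,z_D) ∈ ℤ^D with cat(z_d) = c_d for all d: P(Z_1 = z_1, …, Z_D = z_D ∧ os_r(Z) = Y) = P(cat(Z_1) = c_1, …, cat(Z_D) = c_D ∧ os_r(Z) = Y) · ∏_{d=1}^{D} f(z_d)/m(c_d). Consequently, conditional on the category pattern {cat(Z_d) = c_d, d = 1,…,D} (when it has positive probability together with {os_r(Z)=Y}), the vector (Z_1,…,Z_D) is independent of the event {os_r(Z) = Y}, and Z_1,…,Z_D are mutually conditionally independent with Z_d distributed according to the parent pmf f renormalized to {z ∈ ℤ : cat(z) = c_d}. -/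
open MeasureTheory

/-- The three categories of an integer relative to a fixed value `Y`. -/
inductive Cat3 where
  | lt : Cat3
  | eq : Cat3
  | gt : Cat3

/-- The category of `z` relative to `Y`. -/
def catOf (Y z : ℤ) : Cat3 := if z < Y then Cat3.lt else if z = Y then Cat3.eq else Cat3.gt

/-- The probability mass of each category: `m(lt) = F(Y−1)`, `m(eq) = f(Y)`,
`m(gt) = 1 − F(Y)`. -/
noncomputable def catMass (f : ℤ → ℝ) (Y : ℤ) : Cat3 → ℝ
  | Cat3.lt => Fcdf f (Y - 1)
  | Cat3.eq => f Y
  | Cat3.gt => 1 - Fcdf f Y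

/-!
Whether `os_r(ω) = Y` holds depends only on how many coordinates of `ω` are `≤ Y` and `< Y`,
so it is constant on the box of outcomes with a given category pattern. Hence both events are
either empty or product boxes, `∏ {z_d}` and `∏ {cat = c_d}`, of probabilities `∏ f(z_d)` and
`∏ m(c_d)`.
-/

open Set

instance inst_s9 (f : ℤ → ℝ) : SigmaFinite (parentMeasure f) := by
  unfold parentMeasure; infer_instance

lemma parentMeasure_apply {f : ℤ → ℝ} (hf0 : ∀ z, 0 ≤ f z) (hf : Summable f) (s : Set ℤ) :
    parentMeasure f s = ENNReal.ofReal (∑' x : s, f x) := by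
  rw [parentMeasure, withDensity_apply _ (MeasurableSpace.measurableSet_top),
    lintegral_countable _ s.to_countable,
    ENNReal.ofReal_tsum_of_nonneg (fun x : s => hf0 x) (hf.subtype s)]
  simp

lemma P_univ_pi {f : ℤ → ℝ} (hf0 : ∀ z, 0 ≤ f z) (hf : Summable f) {D : ℕ}
    (s : Fin D → Set ℤ) : P f D (univ.pi s) = ∏ d, ∑' x : s d, f x := by
  simp only [P, Measure.pi_pi, ENNReal.toReal_prod, parentMeasure_apply hf0 hf]
  exact Finset.prod_congr rfl fun d _ => ENNReal.toReal_ofReal (tsum_nonneg fun x => hf0 x)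

lemma catMass_eq_tsum {f : ℤ → ℝ} (hf1 : HasSum f 1) (Y : ℤ) (κ : Cat3) :
    catMass f Y κ = ∑' x : {w | catOf Y w = κ}, f x := by
  cases κ with
  | lt =>
    have hset : {w | catOf Y w = .lt} = {w | w ≤ Y - 1} := by
      ext w; simp only [catOf, mem_ofPred_eq]; split_ifs <;> simp <;> omega
    rw [hset]; rfl
  | eq =>
    have hset : {w | catOf Y w = .eq} = {Y} := by
      ext w; simp only [catOf, mem_ofPred_eq, mem_singleton_iff]; split_ifs <;> simp <;> omega
    rw [hset, tsum_singleton]; rfl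
  | gt =>
    have hset : {w | catOf Y w = .gt} = {w | w ≤ Y}ᶜ := by
      ext w; simp only [catOf, mem_ofPred_eq, mem_compl_iff]; split_ifs <;> simp <;> omega
    have hsplit := hf1.summable.tsum_subtype_add_tsum_subtype_compl {w | w ≤ Y}
    rw [hf1.tsum_eq] at hsplit
    have hcdf : Fcdf f Y = ∑' x : {w | w ≤ Y}, f x := rfl
    rw [hset, catMass]
    linarith

lemma lt_iff_lt_and_le_iff_le_of_catOf_eq {Y a b : ℤ} (h : catOf Y a = catOf Y b) :
    (a < Y ↔ b < Y) ∧ (a ≤ Y ↔ b ≤ Y) := by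
  unfold catOf at h
  split_ifs at h <;> omega

lemma countLe_congr {n : ℕ} {ω z : Fin n → ℤ} {y : ℤ} (h : ∀ d, ω d ≤ y ↔ z d ≤ y) :
    countLe ω y = countLe z y := by
  unfold countLe
  rw [Finset.filter_congr fun d _ => h d]

lemma osEq_congr_of_catOf_eq {n r : ℕ} {Y : ℤ} {ω z : Fin n → ℤ}
    (h : ∀ d, catOf Y (ω d) = catOf Y (z d)) : osEq r ω Y ↔ osEq r z Y := by
  have hle := fun d => lt_iff_lt_and_le_iff_le_of_catOf_eq (h d)
  unfold osEq
  have hle_pred : ∀ d, ω d ≤ Y - 1 ↔ z d ≤ Y - 1 := fun d => by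
    simpa only [Int.le_sub_one_iff] using (hle d).1
  rw [countLe_congr fun d => (hle d).2, countLe_congr hle_pred]

lemma setOf_forall_mem_and_eq_ite {ι α : Type*} {t : ι → Set α} {p : (ι → α) → Prop}
    {z : ι → α} [Decidable (p z)] (h : ∀ ω ∈ univ.pi t, p ω ↔ p z) :
    {ω | (∀ i, ω i ∈ t i) ∧ p ω} = if p z then univ.pi t else ∅ := by
  ext ω
  have hmem : ω ∈ univ.pi t ↔ ∀ i, ω i ∈ t i := mem_univ_pi
  split_ifs with hz
  · exact ⟨fun hω => hmem.2 hω.1, fun hω => ⟨hmem.1 hω, (h ω hω).2 hz⟩⟩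
  · exact ⟨fun hω => hz ((h ω (hmem.2 hω.1)).1 hω.2), False.elim⟩

theorem conditional_independence_given_categories_general
    (f : ℤ → ℝ) (hf0 : ∀ z, 0 ≤ f z) (hf1 : HasSum f 1)
    (Y : ℤ) (D r : ℕ)
    (c : Fin D → Cat3) (hc : ∀ d, 0 < catMass f Y (c d))
    (z : Fin D → ℤ) (hz : ∀ d, catOf Y (z d) = c d) :
    P f D {ω | (∀ d, ω d = z d) ∧ osEq r ω Y}
      = P f D {ω | (∀ d, catOf Y (ω d) = c d) ∧ osEq r ω Y} *
          ∏ d, f (z d) / catMass f Y (c d) := by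
  classical
  have hpoint : {ω : Fin D → ℤ | (∀ d, ω d = z d) ∧ osEq r ω Y}
      = if osEq r z Y then univ.pi (fun d => ({z d} : Set ℤ)) else ∅ :=
    setOf_forall_mem_and_eq_ite (t := fun d => {z d}) fun ω hω => by
      rw [funext fun d => mem_singleton_iff.1 (hω d trivial)]
  have hpattern : {ω : Fin D → ℤ | (∀ d, catOf Y (ω d) = c d) ∧ osEq r ω Y}
      = if osEq r z Y then univ.pi (fun d => {w | catOf Y w = c d}) else ∅ :=
    setOf_forall_mem_and_eq_ite (t := fun d => {w | catOf Y w = c d}) fun ω hω =>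
      osEq_congr_of_catOf_eq fun d => (hω d trivial).trans (hz d).symm
  rw [hpoint, hpattern]
  split_ifs
  · simp only [P_univ_pi hf0 hf1.summable, tsum_singleton, ← catMass_eq_tsum hf1]
    rw [Finset.prod_div_distrib, mul_div_cancel₀ _ (Finset.prod_pos fun d _ => hc d).ne']
  · simp [P]

/-- **Theorem 5.2** (conditional independence given categories): for any category pattern
`c` with positive category masses and any `z ∈ ℤ^D` realizing that pattern,
`P(Z = z ∧ os_r(Z) = Y) = P(cat(Z) = c ∧ os_r(Z) = Y) · ∏_d f(z_d)/m(c_d)`.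
Hence, conditional on the pattern, `(Z_1, …, Z_D)` is independent of `{os_r(Z) = Y}` and
its coordinates are i.i.d. from the truncations of `f` to the respective categories. -/
theorem conditional_independence_given_categories
    (f : ℤ → ℝ) (hf0 : ∀ z, 0 ≤ f z) (hf1 : HasSum f 1)
    (Y : ℤ) (D r : ℕ) (hr1 : 1 ≤ r) (hrD : r ≤ D)
    (c : Fin D → Cat3) (hc : ∀ d, 0 < catMass f Y (c d))
    (z : Fin D → ℤ) (hz : ∀ d, catOf Y (z d) = c d) :
    P f D {ω | (∀ d, ω d = z d) ∧ osEq r ω Y}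
      = P f D {ω | (∀ d, catOf Y (ω d) = c d) ∧ osEq r ω Y} *
          ∏ d, f (z d) / catMass f Y (c d) :=
  conditional_independence_given_categories_general f hf0 hf1 Y D r c hc z hz
end
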